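/- arXiv:math/0106116 — 4 statements merged into one kernel-verified Lean document; each statement's English description precedes it below -/
import Mathlib

section
/- Let u, v, w be mutually orthogonal unit imaginary octonions, and let R_u, R_v, R_w denote right multiplication by u, v, w. Suppose ζ₁ and ζ₂ are Cayley 4-planes such that, for i = 1, 2: R_u, R_v, R_w map ζᵢ into ζᵢ and (p·u)·v = −(p·v)·u = p·w for every p ∈ ζᵢ. Then ζ₁ = ζ₂. (Uniqueness part of the inverse of the isometry between CAYLEY and the Grassmannian of tricomplex sections.) -/
/-!
Every plane `ζ` as in the theorem lies in `K₊ = {p | (p u) v = p w}`. For imaginary `x, y`,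
right multiplications satisfy the Clifford relation `(p x) y + (p y) x = -2⟪x, y⟫ p`, so right
multiplication by a nonzero imaginary `t` orthogonal to `u, v, w` anticommutes with those by
`u, v, w` and maps `K₊` injectively into `K₋ = {p | (p u) v = -(p w)}`. Since right
multiplication by `w ≠ 0` is injective, `K₊ ∩ K₋ = 0`, whence `2 dim K₊ ≤ dim K₊ + dim K₋ ≤ 8`.
A 4-dimensional `ζ ⊆ K₊` is therefore `K₊`.
-/

open Quaternion
open scoped InnerProductSpace

noncomputable section

/-- The octonions `𝕆`, realized as pairs of quaternions carrying the `L²` (Euclidean)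
inner product and norm of `ℝ⁸ ≅ ℍ × ℍ`. -/
abbrev Oct : Type := WithLp 2 (ℍ[ℝ] × ℍ[ℝ])

namespace Oct

/-- Build an octonion from a pair of quaternions. -/
def mk (a b : ℍ[ℝ]) : Oct := (WithLp.equiv 2 (ℍ[ℝ] × ℍ[ℝ])).symm (a, b)

/-- Cayley–Dickson multiplication: `(a,b)·(c,d) = (ac − d̄b, bc̄ + da)`. -/
def omul (x y : Oct) : Oct :=
  mk (x.ofLp.1 * y.ofLp.1 - star y.ofLp.2 * x.ofLp.2) (x.ofLp.2 * star y.ofLp.1 + y.ofLp.2 * x.ofLp.1)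

/-- Octonion conjugation: `(a,b)‾ = (ā, −b)`. -/
def oconj (x : Oct) : Oct := mk (star x.ofLp.1) (-x.ofLp.2)

/-- The unit octonion `1 = (1,0)`. -/
def oone : Oct := mk 1 0

/-- Imaginary part: `Im x = (x − x̄)/2`. -/
def oim (x : Oct) : Oct := (2⁻¹ : ℝ) • (x - oconj x)

/-- An octonion is imaginary if `x̄ = −x`. -/
def IsImaginary (x : Oct) : Prop := oconj x = -x

/-- Two-fold cross product `x × y = Im(ȳx)`. -/
def cross2 (x y : Oct) : Oct := oim (omul (oconj y) x)

/-- Three-fold cross product `x × y × z = ½(x(ȳz) − z(ȳx))`. -/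
def cross3 (x y z : Oct) : Oct :=
  (2⁻¹ : ℝ) • (omul x (omul (oconj y) z) - omul z (omul (oconj y) x))

/-- A Cayley 4-plane: a 4-dimensional real linear subspace of `𝕆` closed under the
three-fold cross product. -/
def IsCayley (ζ : Submodule ℝ Oct) : Prop :=
  Module.finrank ℝ ζ = 4 ∧ ∀ x ∈ ζ, ∀ y ∈ ζ, ∀ z ∈ ζ, cross3 x y z ∈ ζ

/-- Real coordinates of an octonion with respect to the standard basis
`((1,0),(i,0),(j,0),(k,0),(0,1),(0,i),(0,j),(0,k))`. -/
def coord (x : Oct) : Fin 8 → ℝ :=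
  ![x.ofLp.1.re, x.ofLp.1.imI, x.ofLp.1.imJ, x.ofLp.1.imK, x.ofLp.2.re, x.ofLp.2.imI, x.ofLp.2.imJ, x.ofLp.2.imK]

/-- The octonion with the given real coordinates in the standard basis. -/
def ofCoords (g : Fin 8 → ℝ) : Oct :=
  mk ⟨g 0, g 1, g 2, g 3⟩ ⟨g 4, g 5, g 6, g 7⟩

end Oct

namespace Oct

@[ext] lemma ext {x y : Oct} (h₁ : x.fst = y.fst) (h₂ : x.snd = y.snd) : x = y :=
  WithLp.ofLp_injective 2 (Prod.ext h₁ h₂)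

@[simp] lemma omul_fst (x y : Oct) : (omul x y).fst = x.fst * y.fst - star y.snd * x.snd := rfl

@[simp] lemma omul_snd (x y : Oct) : (omul x y).snd = x.snd * star y.fst + y.snd * x.fst := rfl

lemma isImaginary_iff_re_eq_zero {x : Oct} : IsImaginary x ↔ x.fst.re = 0 := by
  simp [IsImaginary, oconj, mk, WithLp.ext_iff, Prod.ext_iff]

lemma inner_oone (x : Oct) : ⟪oone, x⟫_ℝ = x.fst.re := by
  simp [oone, mk, WithLp.prod_inner_apply, Quaternion.inner_def]

lemma omul_omul_add_omul_omul {x y : Oct} (hx : IsImaginary x) (hy : IsImaginary y) (p : Oct) :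
    omul (omul p x) y + omul (omul p y) x = (-2 * ⟪x, y⟫_ℝ) • p := by
  rw [isImaginary_iff_re_eq_zero] at hx hy
  rw [WithLp.prod_inner_apply, Quaternion.inner_def, Quaternion.inner_def]
  ext <;> simp [hx, hy] <;> ring

lemma omul_omul_eq_neg_of_inner_eq_zero {x y : Oct} (hx : IsImaginary x) (hy : IsImaginary y)
    (hxy : ⟪x, y⟫_ℝ = 0) (p : Oct) : omul (omul p x) y = -omul (omul p y) x :=
  eq_neg_of_add_eq_zero_left <| by simp [omul_omul_add_omul_omul hx hy, hxy]

lemma omul_omul_self {x : Oct} (hx : IsImaginary x) (p : Oct) :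
    omul (omul p x) x = (-‖x‖ ^ 2) • p := by
  have h := omul_omul_add_omul_omul hx hx p
  rw [real_inner_self_eq_norm_sq, ← two_smul ℝ, mul_smul] at h
  exact smul_right_injective Oct two_ne_zero (h.trans (by simp))

def omulRight (y : Oct) : Oct →ₗ[ℝ] Oct where
  toFun x := omul x y
  map_add' a b := by ext <;> simp <;> ring
  map_smul' r a := by ext <;> simp <;> ring

@[simp] lemma omulRight_apply (y x : Oct) : omulRight y x = omul x y := rfl

lemma omulRight_injective {x : Oct} (hx : IsImaginary x) (hx0 : x ≠ 0) :
    Function.Injective (omulRight x) := by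
  rw [← LinearMap.ker_eq_bot, LinearMap.ker_eq_bot']
  intro p hp
  have h := omul_omul_self hx p
  simp only [← omulRight_apply, hp, map_zero] at h
  rw [eq_comm, smul_eq_zero] at h
  exact h.resolve_left (by simpa using hx0)

lemma finrank_oct : Module.finrank ℝ Oct = 8 := by
  simp [(WithLp.linearEquiv 2 ℝ (ℍ[ℝ] × ℍ[ℝ])).finrank_eq, Quaternion.finrank_eq_four]

lemma exists_isImaginary_ne_zero_orthogonal (u v w : Oct) :
    ∃ t ≠ 0, IsImaginary t ∧ ⟪t, u⟫_ℝ = 0 ∧ ⟪t, v⟫_ℝ = 0 ∧ ⟪t, w⟫_ℝ = 0 := by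
  set S := Submodule.span ℝ (Set.range ![oone, u, v, w])
  have hS : Module.finrank ℝ S ≤ 4 := (finrank_range_le_card _).trans_eq (Fintype.card_fin 4)
  have hSperp : Sᗮ ≠ ⊥ := by
    intro h
    have := S.finrank_add_finrank_orthogonal
    rw [h, finrank_bot, finrank_oct] at this
    omega
  obtain ⟨t, htS, ht0⟩ := Submodule.exists_mem_ne_zero_of_ne_bot hSperp
  have hort (i : Fin 4) : ⟪t, ![oone, u, v, w] i⟫_ℝ = 0 :=
    S.inner_left_of_mem_orthogonal (Submodule.subset_span (Set.mem_range_self i)) htS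
  refine ⟨t, ht0, ?_, hort 1, hort 2, hort 3⟩
  rw [isImaginary_iff_re_eq_zero, ← inner_oone, real_inner_comm]
  exact hort 0

def tricomplexKer (u v w : Oct) (c : ℝ) : Submodule ℝ Oct :=
  LinearMap.ker (omulRight v ∘ₗ omulRight u - c • omulRight w)

@[simp] lemma mem_tricomplexKer {u v w p : Oct} {c : ℝ} :
    p ∈ tricomplexKer u v w c ↔ omul (omul p u) v = c • omul p w := by
  simp [tricomplexKer, sub_eq_zero]

lemma omul_mem_tricomplexKer_neg {u v w t : Oct} (hu : IsImaginary u) (hv : IsImaginary v)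
    (hw : IsImaginary w) (ht : IsImaginary t) (htu : ⟪t, u⟫_ℝ = 0) (htv : ⟪t, v⟫_ℝ = 0)
    (htw : ⟪t, w⟫_ℝ = 0) {c : ℝ} {p : Oct} (hp : p ∈ tricomplexKer u v w c) :
    omul p t ∈ tricomplexKer u v w (-c) := by
  rw [mem_tricomplexKer] at hp ⊢
  calc omul (omul (omul p t) u) v
      = -omul (omul (omul p u) t) v := by
        rw [omul_omul_eq_neg_of_inner_eq_zero ht hu htu, ← omulRight_apply v, map_neg]; rfl
    _ = omul (omul (omul p u) v) t := by
        rw [omul_omul_eq_neg_of_inner_eq_zero ht hv htv, neg_neg]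
    _ = c • omul (omul p w) t := by rw [hp, ← omulRight_apply t, map_smul]; rfl
    _ = -c • omul (omul p t) w := by
        rw [omul_omul_eq_neg_of_inner_eq_zero hw ht (real_inner_comm t w ▸ htw), smul_neg, neg_smul]

lemma disjoint_tricomplexKer {u v w : Oct} (hw : IsImaginary w) (hw0 : w ≠ 0) {c c' : ℝ}
    (hcc' : c ≠ c') : Disjoint (tricomplexKer u v w c) (tricomplexKer u v w c') := by
  rw [Submodule.disjoint_def]
  intro p hp hp'
  rw [mem_tricomplexKer] at hp hp'
  have hpw : omul p w = 0 := by
    have h : (c - c') • omul p w = 0 := by rw [sub_smul, ← hp, ← hp', sub_self]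
    exact (smul_eq_zero.mp h).resolve_left (sub_ne_zero.mpr hcc')
  exact omulRight_injective hw hw0 (by rw [map_zero]; exact hpw)

lemma finrank_tricomplexKer_le_finrank_neg {u v w : Oct} (hu : IsImaginary u)
    (hv : IsImaginary v) (hw : IsImaginary w) (c : ℝ) :
    Module.finrank ℝ (tricomplexKer u v w c) ≤ Module.finrank ℝ (tricomplexKer u v w (-c)) := by
  obtain ⟨t, ht0, ht, htu, htv, htw⟩ := exists_isImaginary_ne_zero_orthogonal u v w
  have hmaps : ∀ p ∈ tricomplexKer u v w c, omulRight t p ∈ tricomplexKer u v w (-c) :=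
    fun p hp => omul_mem_tricomplexKer_neg hu hv hw ht htu htv htw hp
  refine LinearMap.finrank_le_finrank_of_injective ((LinearMap.injective_restrict_iff hmaps).mpr ?_)
  rw [LinearMap.ker_eq_bot.mpr (omulRight_injective ht ht0)]
  exact disjoint_bot_right

lemma finrank_tricomplexKer_le_four {u v w : Oct} (hu : IsImaginary u) (hv : IsImaginary v)
    (hw : IsImaginary w) (hw0 : w ≠ 0) {c : ℝ} (hc : c ≠ 0) :
    Module.finrank ℝ (tricomplexKer u v w c) ≤ 4 := by
  have hle := finrank_tricomplexKer_le_finrank_neg hu hv hw c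
  have hsum := Submodule.finrank_add_finrank_le_of_disjoint
    (disjoint_tricomplexKer (u := u) (v := v) hw hw0 (self_ne_neg.mpr hc))
  rw [finrank_oct] at hsum
  omega

lemma eq_tricomplexKer_one {u v w : Oct} (hu : IsImaginary u) (hv : IsImaginary v)
    (hw : IsImaginary w) (hw0 : w ≠ 0) {ζ : Submodule ℝ Oct} (hζ : Module.finrank ℝ ζ = 4)
    (h : ∀ p ∈ ζ, omul (omul p u) v = omul p w) : ζ = tricomplexKer u v w 1 :=
  Submodule.eq_of_le_of_finrank_le (fun p hp => by simpa using h p hp)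
    (hζ ▸ finrank_tricomplexKer_le_four hu hv hw hw0 one_ne_zero)

end Oct

theorem cayley_plane_unique_for_tricomplex_triple_general
    (u v w : Oct)
    (hw : ‖w‖ = 1)
    (hui : Oct.IsImaginary u) (hvi : Oct.IsImaginary v) (hwi : Oct.IsImaginary w)
    (ζ₁ ζ₂ : Submodule ℝ Oct)
    (hc₁ : Oct.IsCayley ζ₁) (hc₂ : Oct.IsCayley ζ₂)
    (hhyp₁ : ∀ p ∈ ζ₁, Oct.omul (Oct.omul p u) v = -Oct.omul (Oct.omul p v) u ∧
      Oct.omul (Oct.omul p u) v = Oct.omul p w)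
    (hhyp₂ : ∀ p ∈ ζ₂, Oct.omul (Oct.omul p u) v = -Oct.omul (Oct.omul p v) u ∧
      Oct.omul (Oct.omul p u) v = Oct.omul p w) :
    ζ₁ = ζ₂ := by
  have hw0 : w ≠ 0 := by
    rintro rfl
    simp at hw
  rw [Oct.eq_tricomplexKer_one hui hvi hwi hw0 hc₁.1 fun p hp => (hhyp₁ p hp).2,
    Oct.eq_tricomplexKer_one hui hvi hwi hw0 hc₂.1 fun p hp => (hhyp₂ p hp).2]

/-- a Cayley 4-plane on which right multiplications by a given triple
`u, v, w` of mutually orthogonal unit imaginary octonions act as a hypercomplex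
structure is unique. -/
theorem cayley_plane_unique_for_tricomplex_triple
    (u v w : Oct)
    (hu : ‖u‖ = 1) (hv : ‖v‖ = 1) (hw : ‖w‖ = 1)
    (hui : Oct.IsImaginary u) (hvi : Oct.IsImaginary v) (hwi : Oct.IsImaginary w)
    (huv : ⟪u, v⟫_ℝ = 0) (hvw : ⟪v, w⟫_ℝ = 0) (hwu : ⟪w, u⟫_ℝ = 0)
    (ζ₁ ζ₂ : Submodule ℝ Oct)
    (hc₁ : Oct.IsCayley ζ₁) (hc₂ : Oct.IsCayley ζ₂)
    (hmap₁ : ∀ p ∈ ζ₁, Oct.omul p u ∈ ζ₁ ∧ Oct.omul p v ∈ ζ₁ ∧ Oct.omul p w ∈ ζ₁)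
    (hmap₂ : ∀ p ∈ ζ₂, Oct.omul p u ∈ ζ₂ ∧ Oct.omul p v ∈ ζ₂ ∧ Oct.omul p w ∈ ζ₂)
    (hhyp₁ : ∀ p ∈ ζ₁, Oct.omul (Oct.omul p u) v = -Oct.omul (Oct.omul p v) u ∧
      Oct.omul (Oct.omul p u) v = Oct.omul p w)
    (hhyp₂ : ∀ p ∈ ζ₂, Oct.omul (Oct.omul p u) v = -Oct.omul (Oct.omul p v) u ∧
      Oct.omul (Oct.omul p u) v = Oct.omul p w) :
    ζ₁ = ζ₂ :=
  cayley_plane_unique_for_tricomplex_triple_general u v w hw hui hvi hwi ζ₁ ζ₂ hc₁ hc₂ hhyp₁ hhyp₂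
end
end

section
/- Let h₁, …, h₈ be quaternions, written h_α = a_α + b_α i + c_α j + d_α k with a_α, b_α, c_α, d_α real, and let a, b, c, d ∈ ℝ⁸ denote the corresponding vectors. Then Σ_{α=1}^{8} h̄_α i h_α = Σ_{α=1}^{8} h̄_α j h_α = Σ_{α=1}^{8} h̄_α k h_α = 0 holds if and only if the four vectors a, b, c, d are mutually orthogonal in ℝ⁸ and have equal Euclidean norms: ‖a‖ = ‖b‖ = ‖c‖ = ‖d‖. -/
open Quaternion
open scoped InnerProductSpace

noncomputable section

/-- The quaternion `i`. -/
def qI : ℍ[ℝ] := ⟨0, 1, 0, 0⟩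
/-- The quaternion `j`. -/
def qJ : ℍ[ℝ] := ⟨0, 0, 1, 0⟩
/-- The quaternion `k`. -/
def qK : ℍ[ℝ] := ⟨0, 0, 0, 1⟩

/-!
Expanding `h̄ u h` (`u = i, j, k`) in coordinates shows that each of the three sums is purely
imaginary with coefficients given by the Gram matrix of `a, b, c, d`; for instance
`Σ h̄_α i h_α = (‖a‖² + ‖b‖² - ‖c‖² - ‖d‖²) i + 2(⟪b,c⟫ - ⟪a,d⟫) j + 2(⟪a,c⟫ + ⟪b,d⟫) k`.
Of the nine resulting linear equations, the three diagonal ones force all norms to agree, and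
every off-diagonal inner product occurs once in a sum and once in a difference, so it vanishes.
-/

variable {ι : Type*}

section
variable {R : Type*} [CommRing R] (s : Finset ι) (q : ι → ℍ[R])

lemma Quaternion.re_sum : (∑ α ∈ s, q α).re = ∑ α ∈ s, (q α).re :=
  map_sum (QuaternionAlgebra.reₗ (-1) 0 (-1)) q s

lemma Quaternion.imI_sum : (∑ α ∈ s, q α).imI = ∑ α ∈ s, (q α).imI :=
  map_sum (QuaternionAlgebra.imIₗ (-1) 0 (-1)) q s

lemma Quaternion.imJ_sum : (∑ α ∈ s, q α).imJ = ∑ α ∈ s, (q α).imJ :=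
  map_sum (QuaternionAlgebra.imJₗ (-1) 0 (-1)) q s

lemma Quaternion.imK_sum : (∑ α ∈ s, q α).imK = ∑ α ∈ s, (q α).imK :=
  map_sum (QuaternionAlgebra.imKₗ (-1) 0 (-1)) q s

end

variable [Fintype ι]

lemma EuclideanSpace.inner_equiv_symm (f g : ι → ℝ) :
    ⟪(WithLp.equiv 2 (ι → ℝ)).symm f, (WithLp.equiv 2 (ι → ℝ)).symm g⟫_ℝ =
      ∑ α, f α * g α := by
  simp [PiLp.inner_apply, mul_comm]

lemma EuclideanSpace.norm_equiv_symm_sq (f : ι → ℝ) :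
    ‖(WithLp.equiv 2 (ι → ℝ)).symm f‖ ^ 2 = ∑ α, f α ^ 2 := by
  simp [EuclideanSpace.real_norm_sq_eq]

section
variable (h : ι → ℍ[ℝ])

def reVec : EuclideanSpace ℝ ι := (WithLp.equiv 2 (ι → ℝ)).symm fun α => (h α).re
def imIVec : EuclideanSpace ℝ ι := (WithLp.equiv 2 (ι → ℝ)).symm fun α => (h α).imI
def imJVec : EuclideanSpace ℝ ι := (WithLp.equiv 2 (ι → ℝ)).symm fun α => (h α).imJ
def imKVec : EuclideanSpace ℝ ι := (WithLp.equiv 2 (ι → ℝ)).symm fun α => (h α).imK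

lemma star_mul_qI_mul (q : ℍ[ℝ]) : star q * qI * q =
    ⟨0, q.re ^ 2 + q.imI ^ 2 - q.imJ ^ 2 - q.imK ^ 2, 2 * (q.imI * q.imJ - q.re * q.imK),
      2 * (q.re * q.imJ + q.imI * q.imK)⟩ := by
  ext <;> simp only [Quaternion.re_mul, Quaternion.imI_mul, Quaternion.imJ_mul,
    Quaternion.imK_mul] <;> simp [qI] <;> ring

lemma sum_star_mul_qI_mul_eq_zero_iff : ∑ α, star (h α) * qI * h α = 0 ↔
    ‖reVec h‖ ^ 2 + ‖imIVec h‖ ^ 2 = ‖imJVec h‖ ^ 2 + ‖imKVec h‖ ^ 2 ∧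
      ⟪imIVec h, imJVec h⟫_ℝ = ⟪reVec h, imKVec h⟫_ℝ ∧
      ⟪reVec h, imJVec h⟫_ℝ + ⟪imIVec h, imKVec h⟫_ℝ = 0 := by
  rw [Quaternion.ext_iff, Quaternion.re_sum, Quaternion.imI_sum, Quaternion.imJ_sum,
    Quaternion.imK_sum]
  simp only [star_mul_qI_mul, reVec, imIVec, imJVec, imKVec, EuclideanSpace.inner_equiv_symm,
    EuclideanSpace.norm_equiv_symm_sq]
  simp [Finset.sum_add_distrib, Finset.sum_sub_distrib, ← Finset.mul_sum, sub_sub, sub_eq_zero]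

lemma star_mul_qJ_mul (q : ℍ[ℝ]) : star q * qJ * q =
    ⟨0, 2 * (q.imI * q.imJ + q.re * q.imK), q.re ^ 2 + q.imJ ^ 2 - q.imI ^ 2 - q.imK ^ 2,
      2 * (q.imJ * q.imK - q.re * q.imI)⟩ := by
  ext <;> simp only [Quaternion.re_mul, Quaternion.imI_mul, Quaternion.imJ_mul,
    Quaternion.imK_mul] <;> simp [qJ] <;> ring

lemma sum_star_mul_qJ_mul_eq_zero_iff : ∑ α, star (h α) * qJ * h α = 0 ↔
    ⟪imIVec h, imJVec h⟫_ℝ + ⟪reVec h, imKVec h⟫_ℝ = 0 ∧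
      ‖reVec h‖ ^ 2 + ‖imJVec h‖ ^ 2 = ‖imIVec h‖ ^ 2 + ‖imKVec h‖ ^ 2 ∧
      ⟪imJVec h, imKVec h⟫_ℝ = ⟪reVec h, imIVec h⟫_ℝ := by
  rw [Quaternion.ext_iff, Quaternion.re_sum, Quaternion.imI_sum, Quaternion.imJ_sum,
    Quaternion.imK_sum]
  simp only [star_mul_qJ_mul, reVec, imIVec, imJVec, imKVec, EuclideanSpace.inner_equiv_symm,
    EuclideanSpace.norm_equiv_symm_sq]
  simp [Finset.sum_add_distrib, Finset.sum_sub_distrib, ← Finset.mul_sum, sub_sub, sub_eq_zero]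

lemma star_mul_qK_mul (q : ℍ[ℝ]) : star q * qK * q =
    ⟨0, 2 * (q.imI * q.imK - q.re * q.imJ), 2 * (q.imJ * q.imK + q.re * q.imI),
      q.re ^ 2 + q.imK ^ 2 - q.imI ^ 2 - q.imJ ^ 2⟩ := by
  ext <;> simp only [Quaternion.re_mul, Quaternion.imI_mul, Quaternion.imJ_mul,
    Quaternion.imK_mul] <;> simp [qK] <;> ring

lemma sum_star_mul_qK_mul_eq_zero_iff : ∑ α, star (h α) * qK * h α = 0 ↔
    ⟪imIVec h, imKVec h⟫_ℝ = ⟪reVec h, imJVec h⟫_ℝ ∧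
      ⟪imJVec h, imKVec h⟫_ℝ + ⟪reVec h, imIVec h⟫_ℝ = 0 ∧
      ‖reVec h‖ ^ 2 + ‖imKVec h‖ ^ 2 = ‖imIVec h‖ ^ 2 + ‖imJVec h‖ ^ 2 := by
  rw [Quaternion.ext_iff, Quaternion.re_sum, Quaternion.imI_sum, Quaternion.imJ_sum,
    Quaternion.imK_sum]
  simp only [star_mul_qK_mul, reVec, imIVec, imJVec, imKVec, EuclideanSpace.inner_equiv_symm,
    EuclideanSpace.norm_equiv_symm_sq]
  simp [Finset.sum_add_distrib, Finset.sum_sub_distrib, ← Finset.mul_sum, sub_sub, sub_eq_zero]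

end

/-- for `h_α = a_α + b_α i + c_α j + d_α k`, the moment map equations
`Σ h̄_α i h_α = Σ h̄_α j h_α = Σ h̄_α k h_α = 0` hold iff the vectors
`a, b, c, d ∈ ℝ⁸` are mutually orthogonal and have equal Euclidean norms. -/
theorem moment_map_zero_iff_orthogonal_equal_norms
    (h : Fin 8 → ℍ[ℝ])
    (a b c d : EuclideanSpace ℝ (Fin 8))
    (ha : a = (WithLp.equiv 2 (Fin 8 → ℝ)).symm fun α => (h α).re)
    (hb : b = (WithLp.equiv 2 (Fin 8 → ℝ)).symm fun α => (h α).imI)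
    (hc : c = (WithLp.equiv 2 (Fin 8 → ℝ)).symm fun α => (h α).imJ)
    (hd : d = (WithLp.equiv 2 (Fin 8 → ℝ)).symm fun α => (h α).imK) :
    ((∑ α : Fin 8, star (h α) * qI * h α = 0) ∧
     (∑ α : Fin 8, star (h α) * qJ * h α = 0) ∧
     (∑ α : Fin 8, star (h α) * qK * h α = 0)) ↔
    (⟪a, b⟫_ℝ = 0 ∧ ⟪a, c⟫_ℝ = 0 ∧ ⟪a, d⟫_ℝ = 0 ∧
     ⟪b, c⟫_ℝ = 0 ∧ ⟪b, d⟫_ℝ = 0 ∧ ⟪c, d⟫_ℝ = 0 ∧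
     ‖a‖ = ‖b‖ ∧ ‖b‖ = ‖c‖ ∧ ‖c‖ = ‖d‖) := by
  obtain rfl : a = reVec h := ha
  obtain rfl : b = imIVec h := hb
  obtain rfl : c = imJVec h := hc
  obtain rfl : d = imKVec h := hd
  rw [sum_star_mul_qI_mul_eq_zero_iff, sum_star_mul_qJ_mul_eq_zero_iff,
    sum_star_mul_qK_mul_eq_zero_iff]
  simp only [← sq_eq_sq₀ (norm_nonneg _) (norm_nonneg _)]
  constructor
  · rintro ⟨⟨_, _, _⟩, ⟨_, _, _⟩, ⟨_, _, _⟩⟩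
    refine ⟨?_, ?_, ?_, ?_, ?_, ?_, ?_, ?_, ?_⟩ <;> linarith
  · rintro ⟨_, _, _, _, _, _, _, _, _⟩
    refine ⟨⟨?_, ?_, ?_⟩, ⟨?_, ?_, ?_⟩, ⟨?_, ?_, ?_⟩⟩ <;> linarith
end
end

section
/- If x and y are orthogonal octonions (⟨x,y⟩ = 0), then for every octonion w one has (wȳ)x = −(wx̄)y. -/
open Quaternion
open scoped InnerProductSpace

noncomputable section

/-!
Polarizing the alternative-law identity `(w x̄) x = |x|² w` gives
`(w ȳ) x + (w x̄) y = 2⟨x, y⟩ w`. In Cayley–Dickson coordinates both components reduce, after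
expanding, to the quaternionic identities `ā c + c̄ a = 2⟨a, c⟩ = a c̄ + c ā`, whose right-hand sides
are real and hence central.
-/

namespace Quaternion

theorem mul_star_add_mul_star (a c : ℍ[ℝ]) :
    a * star c + c * star a = ((2 * ⟪a, c⟫_ℝ : ℝ) : ℍ[ℝ]) := by
  ext <;> simp [inner_def] <;> ring

theorem star_mul_add_star_mul (a c : ℍ[ℝ]) :
    star a * c + star c * a = ((2 * ⟪a, c⟫_ℝ : ℝ) : ℍ[ℝ]) := by
  ext <;> simp [inner_def] <;> ring

end Quaternion

namespace Oct

theorem omul_omul_oconj_add (w x y : Oct) :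
    omul (omul w (oconj y)) x + omul (omul w (oconj x)) y = (2 * ⟪x, y⟫_ℝ) • w := by
  obtain ⟨⟨a, b⟩⟩ := x
  obtain ⟨⟨c, d⟩⟩ := y
  obtain ⟨⟨p, q⟩⟩ := w
  refine WithLp.ofLp_injective 2 (Prod.ext ?_ ?_) <;>
    simp only [omul, oconj, mk, WithLp.prod_inner_apply, WithLp.ofLp_add, WithLp.ofLp_smul,
      WithLp.equiv_symm_apply, Prod.fst_add, Prod.snd_add, Prod.smul_fst, Prod.smul_snd,
      star_neg, star_star, mul_add]
  · calc _ = p * (star a * c + star c * a) + (star b * d + star d * b) * p := by noncomm_ring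
      _ = _ := by
        rw [star_mul_add_star_mul, star_mul_add_star_mul, mul_coe_eq_smul, coe_mul_eq_smul,
          ← add_smul]
  · calc _ = q * (a * star c + c * star a) + (b * star d + d * star b) * q := by noncomm_ring
      _ = _ := by
        rw [mul_star_add_mul_star, mul_star_add_mul_star, mul_coe_eq_smul, coe_mul_eq_smul,
          ← add_smul]

end Oct

/-- for orthogonal octonions `x, y` and any octonion `w`:
`(wȳ)x = −(wx̄)y`. -/
theorem mul_conj_mul_orthogonal_right (x y : Oct) (hxy : ⟪x, y⟫_ℝ = 0) (w : Oct) :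
    Oct.omul (Oct.omul w (Oct.oconj y)) x = -Oct.omul (Oct.omul w (Oct.oconj x)) y := by
  rw [eq_neg_iff_add_eq_zero, Oct.omul_omul_oconj_add, hxy, mul_zero, zero_smul]
end
end

section
/- For all octonions x, y, z the middle Moufang identity holds: (xy)(zx) = (x(yz))x, and moreover (x(yz))x = x((yz)x), so that (xy)(zx) = x(yz)x is unambiguous. -/
open Quaternion
open scoped InnerProductSpace

noncomputable section

/-! The Cayley–Dickson octonions satisfy the alternative laws `(xx)y = x(xy)` and `(yx)x = y(xx)`
(a computation in coordinates). In an alternative ring the associator `(a, b, c)` is alternating,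
and the Teichmüller identity `associator_cocycle` at `(x, x, y, z)`, `(y, z, x, x)` and
`(x, y, z, x)` gives `2 (x², y, z) = 2 (x (x, y, z) + (x, y, z) x)`. Without 2-torsion this yields
`(x, xy, z) = (x, y, z) x`, and that is exactly the difference `(xy)(zx) - (x(yz))x`.
The second identity is flexibility, `(x, w, x) = 0`. -/

class IsAlternative (R : Type*) [Mul R] : Prop where
  mul_self_mul (a b : R) : a * a * b = a * (a * b)
  mul_mul_self (a b : R) : a * b * b = a * (b * b)

namespace IsAlternative

variable {R : Type*} [NonUnitalNonAssocRing R] [IsAlternative R]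

theorem associator_self_left (a b : R) : associator a a b = 0 := by
  rw [associator_apply, mul_self_mul, sub_self]

theorem associator_self_right (a b : R) : associator a b b = 0 := by
  rw [associator_apply, mul_mul_self, sub_self]

theorem associator_swap_left (a b c : R) : associator a b c = -associator b a c := by
  have h := associator_self_left (a + b) c
  simp only [associator_apply, add_mul, mul_add, mul_self_mul] at h ⊢
  rw [eq_neg_iff_add_eq_zero, ← h]
  abel

theorem associator_swap_right (a b c : R) : associator a b c = -associator a c b := by
  have h := associator_self_right a (b + c)
  simp only [associator_apply, add_mul, mul_add, mul_mul_self] at h ⊢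
  rw [eq_neg_iff_add_eq_zero, ← h]
  abel

theorem associator_cyclic (a b c : R) : associator a b c = associator b c a := by
  rw [associator_swap_left, associator_swap_right, neg_neg]

theorem associator_self_mid (a b : R) : associator a b a = 0 := by
  rw [associator_swap_right, associator_self_left, neg_zero]

theorem flexible (a b : R) : a * b * a = a * (b * a) :=
  sub_eq_zero.mp (associator_self_mid a b)

theorem associator_mul_self_left [IsAddTorsionFree R] (a b c : R) :
    associator (a * a) b c = a * associator a b c + associator a b c * a := by
  have h₁ : associator (a * a) b c = a * associator a b c + associator a (a * b) c := by
    have h := associator_cocycle a a b c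
    rw [associator_self_left, associator_self_left, zero_mul] at h
    rw [eq_comm, ← sub_eq_zero, ← h]
    abel
  have h₂ : associator (a * a) b c = associator a b (c * a) + associator a b c * a := by
    have h := associator_cocycle b c a a
    rw [associator_self_right, associator_self_right, mul_zero, ← associator_cyclic a b (c * a),
      ← associator_cyclic (a * a) b c, ← associator_cyclic a b c] at h
    rw [eq_comm, ← sub_eq_zero, ← h]
    abel
  have h₃ : associator a (a * b) c + associator a b (c * a) =
      a * associator a b c + associator a b c * a := by
    have h := associator_cocycle a b c a
    rw [← associator_cyclic a b c, ← associator_cyclic a (a * b) c, associator_self_mid] at h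
    rw [eq_comm, ← sub_eq_zero, ← h]
    abel
  refine IsAddTorsionFree.nsmul_right_injective two_ne_zero ?_
  calc 2 • associator (a * a) b c
      = a * associator a b c + associator a b c * a
        + (associator a (a * b) c + associator a b (c * a)) := by
        rw [two_nsmul]; nth_rw 1 [h₁]; rw [h₂]; abel
    _ = 2 • (a * associator a b c + associator a b c * a) := by rw [h₃, two_nsmul]

theorem associator_self_mul_mid [IsAddTorsionFree R] (a b c : R) :
    associator a (a * b) c = associator a b c * a := by
  have h := associator_cocycle a a b c
  rw [associator_self_left, associator_self_left, zero_mul, associator_mul_self_left] at h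
  rw [← sub_eq_zero, ← h]
  abel

theorem moufang_middle [IsAddTorsionFree R] (a b c : R) :
    a * b * (c * a) = a * (b * c) * a := by
  have h := associator_self_mul_mid a b c
  rw [associator_cyclic a (a * b) c, associator_apply, associator_apply] at h
  rwa [sub_mul, sub_right_inj] at h

end IsAlternative

namespace Oct

theorem ext_ofLp {x y : Oct} (h₁ : x.ofLp.1 = y.ofLp.1) (h₂ : x.ofLp.2 = y.ofLp.2) : x = y :=
  WithLp.ofLp_injective 2 (Prod.ext h₁ h₂)

instance : Mul Oct := ⟨omul⟩

@[simp]
theorem ofLp_mul (x y : Oct) :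
    (x * y).ofLp = (x.ofLp.1 * y.ofLp.1 - star y.ofLp.2 * x.ofLp.2,
      x.ofLp.2 * star y.ofLp.1 + y.ofLp.2 * x.ofLp.1) := rfl

instance : NonUnitalNonAssocRing Oct where
  left_distrib x y z := by
    refine ext_ofLp ?_ ?_ <;> simp only [ofLp_mul, WithLp.ofLp_add, Prod.fst_add, Prod.snd_add,
      star_add] <;> noncomm_ring
  right_distrib x y z := by
    refine ext_ofLp ?_ ?_ <;> simp only [ofLp_mul, WithLp.ofLp_add, Prod.fst_add, Prod.snd_add] <;>
      noncomm_ring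
  zero_mul x := ext_ofLp (by simp) (by simp)
  mul_zero x := ext_ofLp (by simp) (by simp)

instance : IsAddTorsionFree Oct := .of_isTorsionFree ℝ Oct

instance : IsAlternative Oct := by
  constructor <;>
  · rintro ⟨⟨a, b⟩⟩ ⟨⟨c, d⟩⟩
    apply ext_ofLp <;> simp only [ofLp_mul] <;> ext <;>
      simp only [re_mul, imI_mul, imJ_mul, imK_mul, re_sub, imI_sub, imJ_sub, imK_sub,
        re_add, imI_add, imJ_add, imK_add, re_star, imI_star, imJ_star, imK_star] <;> ring

end Oct

/-- the middle Moufang identity `(xy)(zx) = (x(yz))x` holds in the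
octonions, and `(x(yz))x = x((yz)x)`, so `(xy)(zx) = x(yz)x` is unambiguous. -/
theorem moufang_middle (x y z : Oct) :
    Oct.omul (Oct.omul x y) (Oct.omul z x) = Oct.omul (Oct.omul x (Oct.omul y z)) x ∧
      Oct.omul (Oct.omul x (Oct.omul y z)) x = Oct.omul x (Oct.omul (Oct.omul y z) x) :=
  ⟨IsAlternative.moufang_middle x y z, IsAlternative.flexible x (y * z)⟩
end
end
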